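/- Let a, b, c ∈ ℂ with 0 < Re(a) and 0 < Re(c-a), and define f(z) = ∫_{t=0}^{1} t^{a-1}(1-t)^{c-a-1}(1-zt)^{-b} dt using principal complex powers. Then f is twice complex-differentiable on ℂ ∖ [1,∞) and for every z ∈ ℂ ∖ [1,∞): z(1-z)·f''(z) + (c-(a+b+1)z)·f'(z) - a·b·f(z) = 0. -/

import Mathlib

/-!
Differentiating under the integral sign gives
`f⁽ᵏ⁾(z) = (b)ₖ ∫₀¹ t^{a+k-1}(1-t)^{c-a-1}(1-zt)^{-b-k} dt`; the domination is locally uniform in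
`z` because `(z, t) ↦ 1 - zt` maps a compact neighbourhood of `z` times `[0,1]` into the slit
plane. The hypergeometric combination of `f, f', f''` is then `b` times the integral of
`-d/dt [t^a (1-t)^{c-a} (1-zt)^{-b-1}]`, which vanishes because this potential is `0` at both
endpoints when `Re a > 0` and `Re (c - a) > 0`.
-/

open Complex Set MeasureTheory Metric Filter Topology
open scoped Interval

namespace EulerHypergeometric

def slitAtOne : Set ℂ := {z : ℂ | ∀ r : ℝ, 1 ≤ r → z ≠ (r : ℂ)}

lemma isOpen_slitAtOne : IsOpen slitAtOne := by
  have h : slitAtOne = ((↑) '' Ici (1 : ℝ))ᶜ := by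
    ext z
    simp [slitAtOne, eq_comm]
  rw [h]
  exact (isometry_ofReal.isClosedEmbedding.isClosedMap _ isClosed_Ici).isOpen_compl

lemma one_sub_mul_ofReal_mem_slitPlane {z : ℂ} (hz : z ∈ slitAtOne) {t : ℝ}
    (ht : t ∈ Icc (0 : ℝ) 1) : 1 - z * t ∈ slitPlane := by
  rcases ht.1.eq_or_lt with rfl | ht0
  · simp [one_mem_slitPlane]
  rw [mem_slitPlane_iff]
  by_contra! h
  simp only [sub_re, one_re, mul_re, ofReal_re, ofReal_im, mul_zero, sub_zero, sub_im, one_im,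
    mul_im, zero_add, zero_sub, neg_eq_zero, mul_eq_zero, ht0.ne', or_false] at h
  exact hz z.re (by nlinarith [ht.2]) (ext rfl h.2)

lemma cpow_eq_cpow_mul_self {x : ℂ} (hx : x ≠ 0) {y y' : ℂ} (h : y = y' + 1) :
    x ^ y = x ^ y' * x := by
  rw [h, cpow_add _ _ hx, cpow_one]

lemma continuousOn_one_sub_mul_cpow {z : ℂ} (hz : z ∈ slitAtOne) (e : ℂ) :
    ContinuousOn (fun t : ℝ => (1 - z * t) ^ e) (Icc 0 1) := fun _ ht =>
  (ContinuousAt.cpow (f := fun t : ℝ => 1 - z * t) (by fun_prop) continuousAt_const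
    (one_sub_mul_ofReal_mem_slitPlane hz ht)).continuousWithinAt

lemma exists_bound_norm_one_sub_mul_cpow {K : Set ℂ} (hK : IsCompact K) (hKU : K ⊆ slitAtOne)
    (e : ℂ) : ∃ C, ∀ z ∈ K, ∀ t ∈ Icc (0 : ℝ) 1, ‖(1 - z * t) ^ e‖ ≤ C := by
  have hc : ContinuousOn (fun x : ℂ × ℝ => (1 - x.1 * x.2) ^ e) (K ×ˢ Icc 0 1) := fun x hx =>
    (ContinuousAt.cpow (f := fun x : ℂ × ℝ => 1 - x.1 * x.2) (by fun_prop) continuousAt_const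
      (one_sub_mul_ofReal_mem_slitPlane (hKU hx.1) hx.2)).continuousWithinAt
  obtain ⟨C, hC⟩ := (hK.prod isCompact_Icc).exists_bound_of_continuousOn hc
  exact ⟨C, fun z hz t ht => hC (z, t) ⟨hz, ht⟩⟩

noncomputable def eulerKernel (p q s z : ℂ) (t : ℝ) : ℂ :=
  (t : ℂ) ^ (p - 1) * (1 - (t : ℂ)) ^ (q - 1) * (1 - z * t) ^ (-s)

noncomputable def eulerIntegral (p q s z : ℂ) : ℂ :=
  ∫ t in (0 : ℝ)..1, eulerKernel p q s z t

variable {p q z : ℂ}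

lemma intervalIntegrable_eulerKernel (hp : 0 < p.re) (hq : 0 < q.re) (s : ℂ)
    (hz : z ∈ slitAtOne) : IntervalIntegrable (eulerKernel p q s z) volume 0 1 :=
  (betaIntegral_convergent hp hq).mul_continuousOn
    (by rw [uIcc_of_le zero_le_one]; exact continuousOn_one_sub_mul_cpow hz _)

lemma hasDerivAt_eulerKernel (s : ℂ) {t : ℝ} (ht : t ≠ 0) (hz : 1 - z * t ∈ slitPlane) :
    HasDerivAt (fun w => eulerKernel p q s w t) (s * eulerKernel (p + 1) q (s + 1) z t) z := by
  have hw : HasDerivAt (fun w : ℂ => 1 - w * t) (-t) z := by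
    simpa using ((hasDerivAt_id z).mul_const (t : ℂ)).const_sub 1
  refine ((hw.cpow_const (c := -s) hz).const_mul
    ((t : ℂ) ^ (p - 1) * (1 - (t : ℂ)) ^ (q - 1))).congr_deriv ?_
  rw [eulerKernel, cpow_eq_cpow_mul_self (ofReal_ne_zero.2 ht) (show p + 1 - 1 = p - 1 + 1 by ring),
    show -(s + 1) = -s - 1 by ring]
  ring

lemma hasDerivAt_eulerIntegral (hp : 0 < p.re) (hq : 0 < q.re) (s : ℂ) (hz : z ∈ slitAtOne) :
    HasDerivAt (eulerIntegral p q s) (s * eulerIntegral (p + 1) q (s + 1) z) z := by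
  obtain ⟨ε, hε, hεz⟩ : ∃ ε > 0, closedBall z ε ⊆ slitAtOne := by
    obtain ⟨δ, hδ, hδz⟩ := Metric.isOpen_iff.mp isOpen_slitAtOne z hz
    exact ⟨δ / 2, by positivity, (closedBall_subset_ball (by linarith)).trans hδz⟩
  obtain ⟨C, hC⟩ :=
    exists_bound_norm_one_sub_mul_cpow (isCompact_closedBall z ε) hεz (-(s + 1))
  have hp1 : 0 < (p + 1).re := by rw [add_re, one_re]; linarith
  have hball : ∀ w ∈ ball z ε, w ∈ slitAtOne := fun w hw => hεz (ball_subset_closedBall hw)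
  have hbound : ∀ t ∈ Ι (0 : ℝ) 1, ∀ w ∈ ball z ε,
      ‖s * eulerKernel (p + 1) q (s + 1) w t‖ ≤
        ‖s‖ * (‖(t : ℂ) ^ (p + 1 - 1) * (1 - (t : ℂ)) ^ (q - 1)‖ * C) := by
    intro t ht w hw
    rw [uIoc_of_le zero_le_one] at ht
    rw [norm_mul, eulerKernel, norm_mul]
    gcongr
    exact hC w (ball_subset_closedBall hw) t (Ioc_subset_Icc_self ht)
  have hderiv : ∀ t ∈ Ι (0 : ℝ) 1, ∀ w ∈ ball z ε,
      HasDerivAt (fun w => eulerKernel p q s w t) (s * eulerKernel (p + 1) q (s + 1) w t) w := by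
    intro t ht w hw
    rw [uIoc_of_le zero_le_one] at ht
    exact hasDerivAt_eulerKernel s ht.1.ne'
      (one_sub_mul_ofReal_mem_slitPlane (hball w hw) (Ioc_subset_Icc_self ht))
  have h := intervalIntegral.hasDerivAt_integral_of_dominated_loc_of_deriv_le
    (ball_mem_nhds z hε)
    (eventually_of_mem (isOpen_slitAtOne.mem_nhds hz) fun w hw =>
      (intervalIntegrable_eulerKernel hp hq s hw).def'.aestronglyMeasurable)
    (intervalIntegrable_eulerKernel hp hq s hz)
    ((intervalIntegrable_eulerKernel hp1 hq (s + 1) hz).const_mul s).def'.aestronglyMeasurable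
    (.of_forall hbound) (((betaIntegral_convergent hp1 hq).norm.mul_const C).const_mul ‖s‖)
    (.of_forall hderiv)
  rw [intervalIntegral.integral_const_mul] at h
  exact h.2

lemma hasDerivAt_eulerPotential (s : ℂ) {t : ℝ} (ht : t ∈ Ioo (0 : ℝ) 1)
    (hz : 1 - z * t ∈ slitPlane) :
    HasDerivAt (fun t : ℝ => (t : ℂ) ^ p * (1 - (t : ℂ)) ^ q * (1 - z * t) ^ (-(s + 1)))
      (p * eulerKernel p q s z t - (p + q - (p + s + 1) * z) * eulerKernel (p + 1) q (s + 1) z t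
        - z * (1 - z) * (s + 1) * eulerKernel (p + 1 + 1) q (s + 1 + 1) z t) t := by
  have ht0 : (t : ℂ) ≠ 0 := ofReal_ne_zero.2 ht.1.ne'
  have h1t : 1 - (t : ℂ) ∈ slitPlane := by
    rw [← ofReal_one, ← ofReal_sub]
    exact ofReal_mem_slitPlane.2 (sub_pos.2 ht.2)
  have hA : HasDerivAt (fun y : ℝ => (y : ℂ) ^ p) (p * (t : ℂ) ^ (p - 1)) t := by
    simpa using ((hasDerivAt_id (t : ℂ)).cpow_const (c := p)
      (ofReal_mem_slitPlane.2 ht.1)).comp_ofReal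
  have hB :
      HasDerivAt (fun y : ℝ => (1 - (y : ℂ)) ^ q) (q * (1 - (t : ℂ)) ^ (q - 1) * -1) t :=
    (((hasDerivAt_id (t : ℂ)).const_sub 1).cpow_const h1t).comp_ofReal
  have hC : HasDerivAt (fun y : ℝ => (1 - z * y) ^ (-(s + 1)))
      (-(s + 1) * (1 - z * t) ^ (-(s + 1) - 1) * -(z * 1)) t :=
    ((((hasDerivAt_id (t : ℂ)).const_mul z).const_sub 1).cpow_const hz).comp_ofReal
  refine ((hA.mul hB).mul hC).congr_deriv ?_
  have hw0 := slitPlane_ne_zero hz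
  have h1t0 := slitPlane_ne_zero h1t
  simp only [eulerKernel, Pi.mul_apply]
  rw [cpow_eq_cpow_mul_self ht0 (show p = p - 1 + 1 by ring),
    cpow_eq_cpow_mul_self ht0 (show p + 1 + 1 - 1 = p + 1 - 1 + 1 by ring),
    cpow_eq_cpow_mul_self ht0 (show p + 1 - 1 = p - 1 + 1 by ring),
    cpow_eq_cpow_mul_self h1t0 (show q = q - 1 + 1 by ring),
    cpow_eq_cpow_mul_self hw0 (show -s = -(s + 1) + 1 by ring),
    cpow_eq_cpow_mul_self hw0 (show -(s + 1) = -(s + 1 + 1) + 1 by ring),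
    show -(s + 1) - 1 = -(s + 1 + 1) by ring]
  ring

lemma eulerIntegral_contiguous (hp : 0 < p.re) (hq : 0 < q.re) (s : ℂ) (hz : z ∈ slitAtOne) :
    z * (1 - z) * (s + 1) * eulerIntegral (p + 1 + 1) q (s + 1 + 1) z
      + (p + q - (p + s + 1) * z) * eulerIntegral (p + 1) q (s + 1) z
      - p * eulerIntegral p q s z = 0 := by
  have hp1 : 0 < (p + 1).re := by rw [add_re, one_re]; linarith
  have hp2 : 0 < (p + 1 + 1).re := by rw [add_re, one_re]; linarith
  have hK0 := intervalIntegrable_eulerKernel hp hq s hz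
  have hK1 := intervalIntegrable_eulerKernel hp1 hq (s + 1) hz
  have hK2 := intervalIntegrable_eulerKernel hp2 hq (s + 1 + 1) hz
  have hcont : ContinuousOn
      (fun t : ℝ => (t : ℂ) ^ p * (1 - (t : ℂ)) ^ q * (1 - z * t) ^ (-(s + 1)))
      (Icc 0 1) := by
    have h1t : Continuous fun t : ℝ => (1 - (t : ℂ)) ^ q := by
      simpa only [Function.comp_def, ofReal_sub, ofReal_one] using
        (continuous_ofReal_cpow_const hq).comp (continuous_sub_left (1 : ℝ))
    exact ((continuous_ofReal_cpow_const hp).mul h1t).continuousOn.mul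
      (continuousOn_one_sub_mul_cpow hz _)
  have hFTC := intervalIntegral.integral_eq_sub_of_hasDeriv_right_of_le zero_le_one hcont
    (fun t ht => (hasDerivAt_eulerPotential s ht
      (one_sub_mul_ofReal_mem_slitPlane hz (Ioo_subset_Icc_self ht))).hasDerivWithinAt)
    (((hK0.const_mul p).sub (hK1.const_mul _)).sub (hK2.const_mul _))
  rw [intervalIntegral.integral_sub ((hK0.const_mul p).sub (hK1.const_mul _)) (hK2.const_mul _),
    intervalIntegral.integral_sub (hK0.const_mul p) (hK1.const_mul _),
    intervalIntegral.integral_const_mul, intervalIntegral.integral_const_mul,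
    intervalIntegral.integral_const_mul] at hFTC
  have hp0 : p ≠ 0 := fun h => by simp [h] at hp
  have hq0 : q ≠ 0 := fun h => by simp [h] at hq
  simp only [ofReal_one, ofReal_zero, sub_self, zero_cpow hp0, zero_cpow hq0, mul_zero, zero_mul,
    sub_zero] at hFTC
  unfold eulerIntegral
  linear_combination -hFTC

lemma hasDerivAt_deriv_eulerIntegral (hp : 0 < p.re) (hq : 0 < q.re) (s : ℂ)
    (hz : z ∈ slitAtOne) :
    HasDerivAt (deriv (eulerIntegral p q s))
      (s * ((s + 1) * eulerIntegral (p + 1 + 1) q (s + 1 + 1) z)) z := by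
  have hp1 : 0 < (p + 1).re := by rw [add_re, one_re]; linarith
  have hderiv : deriv (eulerIntegral p q s) =ᶠ[𝓝 z]
      fun w => s * eulerIntegral (p + 1) q (s + 1) w :=
    eventually_of_mem (isOpen_slitAtOne.mem_nhds hz) fun w hw =>
      (hasDerivAt_eulerIntegral hp hq s hw).deriv
  exact ((hasDerivAt_eulerIntegral hp1 hq (s + 1) hz).const_mul s).congr_of_eventuallyEq hderiv

theorem eulerIntegral_hypergeometric_ode (hp : 0 < p.re) (hq : 0 < q.re) (s : ℂ)
    (hz : z ∈ slitAtOne) :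
    z * (1 - z) * deriv (deriv (eulerIntegral p q s)) z
      + (p + q - (p + s + 1) * z) * deriv (eulerIntegral p q s) z
      - p * s * eulerIntegral p q s z = 0 := by
  rw [(hasDerivAt_deriv_eulerIntegral hp hq s hz).deriv,
    (hasDerivAt_eulerIntegral hp hq s hz).deriv]
  linear_combination s * eulerIntegral_contiguous hp hq s hz

end EulerHypergeometric

open EulerHypergeometric in
/-- Euler's integral `f(z) = ∫₀¹ t^{a-1}(1-t)^{c-a-1}(1-zt)^{-b} dt` is twice
complex-differentiable on `ℂ ∖ [1,∞)` and satisfies Gauss' hypergeometric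
differential equation there. -/
theorem stmt15 (a b c : ℂ) (ha : 0 < a.re) (hca : 0 < (c - a).re)
    (f : ℂ → ℂ)
    (hf : ∀ w : ℂ, f w = ∫ t in (0 : ℝ)..1,
      (t : ℂ) ^ (a - 1) * ((1 : ℂ) - (t : ℂ)) ^ (c - a - 1) * (1 - w * (t : ℂ)) ^ (-b)) :
    DifferentiableOn ℂ f {z : ℂ | ∀ r : ℝ, 1 ≤ r → z ≠ (r : ℂ)} ∧
    DifferentiableOn ℂ (deriv f) {z : ℂ | ∀ r : ℝ, 1 ≤ r → z ≠ (r : ℂ)} ∧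
    ∀ z ∈ {z : ℂ | ∀ r : ℝ, 1 ≤ r → z ≠ (r : ℂ)},
      z * (1 - z) * deriv (deriv f) z + (c - (a + b + 1) * z) * deriv f z
        - a * b * f z = 0 := by
  obtain rfl : f = eulerIntegral a (c - a) b := funext hf
  refine ⟨fun z hz =>
      (hasDerivAt_eulerIntegral ha hca b hz).differentiableAt.differentiableWithinAt,
    fun z hz =>
      (hasDerivAt_deriv_eulerIntegral ha hca b hz).differentiableAt.differentiableWithinAt,
    fun z hz => ?_⟩
  simpa only [add_sub_cancel] using eulerIntegral_hypergeometric_ode ha hca b hz
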